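/- The deforming function f_3(s) = 1 − √s on [0,1] (extended by 0 for s > 1) satisfies the applicability criterion in dimension n = 3: for all s ≥ 0, s² ∫_0^1 t² ρ_3(ts) f_3(t²) dt + ρ_3(s) ≥ 0, where ρ_3(u) = sin(u)/u for u > 0 and ρ_3(0) = 1. -/

import Mathlib

open MeasureTheory Real

/-- `ρ_3(u) = sin u / u` for `u > 0`, `ρ_3(0) = 1`. -/
noncomputable def rho3 (u : ℝ) : ℝ := if u = 0 then 1 else Real.sin u / u

/-- The deforming function `f_3(s) = 1 - √s` on `[0,1]`, `0` for `s > 1`. -/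
noncomputable def f3 (s : ℝ) : ℝ := if s ≤ 1 then 1 - Real.sqrt s else 0

/-- Antiderivative of `(t - t²) sin(ts) / s`. -/
noncomputable def H3 (s t : ℝ) : ℝ :=
  (-(t - t ^ 2) * Real.cos (t * s) * s ^ 2 + (1 - 2 * t) * Real.sin (t * s) * s
      - 2 * Real.cos (t * s)) / s ^ 4

lemma H3_deriv (s : ℝ) (hs : s ≠ 0) (t : ℝ) :
    HasDerivAt (H3 s) ((t - t ^ 2) * Real.sin (t * s) / s) t := by
  have hc : HasDerivAt (fun u : ℝ => Real.cos (u * s)) (-Real.sin (t * s) * s) t := by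
    simpa [Function.comp_def] using (Real.hasDerivAt_cos (t * s)).comp t ((hasDerivAt_id t).mul_const s)
  have hsn : HasDerivAt (fun u : ℝ => Real.sin (u * s)) (Real.cos (t * s) * s) t := by
    simpa [Function.comp_def] using (Real.hasDerivAt_sin (t * s)).comp t ((hasDerivAt_id t).mul_const s)
  have hp1 : HasDerivAt (fun u : ℝ => -(u - u ^ 2)) (-(1 - 2 * t)) t := by
    simpa [Pi.sub_def, Pi.neg_def] using ((hasDerivAt_id t).sub (hasDerivAt_pow 2 t)).neg
  have hp2 : HasDerivAt (fun u : ℝ => 1 - 2 * u) (-2 : ℝ) t := by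
    simpa using ((hasDerivAt_id t).const_mul (2 : ℝ)).const_sub 1
  have h1 := (hp1.mul hc).mul_const (s ^ 2)
  have h2 := (hp2.mul hsn).mul_const s
  have h3 := hc.const_mul (2 : ℝ)
  have h := ((h1.add h2).sub h3).div_const (s ^ 4)
  refine h.congr_deriv ?_
  field_simp
  ring

/-- `f_3` satisfies the applicability criterion in dimension 3. -/
theorem f3_satisfies_criterion (s : ℝ) (hs : 0 ≤ s) :
    0 ≤ s ^ 2 * (∫ t in (0 : ℝ)..1, t ^ 2 * rho3 (t * s) * f3 (t ^ 2)) + rho3 s := by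
  rcases eq_or_lt_of_le hs with h | h
  · simp [← h, rho3]
  have hsne : s ≠ 0 := h.ne'
  have hint : (∫ t in (0 : ℝ)..1, t ^ 2 * rho3 (t * s) * f3 (t ^ 2))
      = ∫ t in (0 : ℝ)..1, (t - t ^ 2) * Real.sin (t * s) / s := by
    apply intervalIntegral.integral_congr
    intro t ht
    rw [Set.uIcc_of_le zero_le_one] at ht
    obtain ⟨ht0, ht1⟩ := ht
    rcases eq_or_lt_of_le ht0 with h0 | h0
    · simp [← h0, f3, rho3]
    · have hts : t * s ≠ 0 := (mul_pos h0 h).ne'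
      have ht2 : t ^ 2 ≤ 1 := by nlinarith
      simp only [rho3, f3, if_neg hts, if_pos ht2, Real.sqrt_sq h0.le]
      field_simp
  have hint2 : (∫ t in (0 : ℝ)..1, (t - t ^ 2) * Real.sin (t * s) / s) = H3 s 1 - H3 s 0 := by
    refine intervalIntegral.integral_eq_sub_of_hasDerivAt (fun t _ => H3_deriv s hsne t) ?_
    exact (Continuous.div_const (by continuity) s).intervalIntegrable 0 1
  rw [hint, hint2]
  have key : s ^ 2 * (H3 s 1 - H3 s 0) + rho3 s = 2 * (1 - Real.cos s) / s ^ 2 := by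
    simp only [H3, rho3, if_neg hsne, one_mul, zero_mul, Real.cos_zero, Real.sin_zero]
    field_simp
    ring
  rw [key]
  apply div_nonneg _ (by positivity)
  nlinarith [Real.cos_le_one s]
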